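/- Corollary: the block-tridiagonal matrix A of the multi-level discretized HJB setup is an M-matrix: A is invertible and every entry of A⁻¹ is nonnegative. -/
import Mathlib


/-- Entry `(l, j)` (0-indexed) of the diagonal block `Z^i` (level `i`, 0-indexed)
of the multi-level discretized HJB scheme.  Row `0` is the Dirichlet row. -/
noncomputable def hjbZEntry (dx r : ℝ) (c1 c2 ρ θ ψ : ℕ → ℕ → ℝ) (i l j : ℕ) : ℝ :=
  if l = 0 then (if j = 0 then 1 else 0)
  else
    -- upwinding indicator
    let I : ℝ := if 2 * c2 i l < dx * |c1 i l| then 1 else 0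
    if j = l then
      ρ i l * θ i l * (ψ i l * (r + 2 * c2 i l / dx ^ 2 + I * |c1 i l| / dx)
          + (1 - ψ i l) / dx)
        + ρ i l * (1 - θ i l) + (1 - ρ i l)
    else if j = l + 1 then
      -(ρ i l * θ i l * ψ i l *
        (c2 i l / dx ^ 2 + c1 i l / (2 * dx) + I * |c1 i l| / (2 * dx)))
    else if j + 1 = l then
      ρ i l * θ i l *
        (-(ψ i l * (c2 i l / dx ^ 2 - c1 i l / (2 * dx) + I * |c1 i l| / (2 * dx)))
          - (1 - ψ i l) / dx)
    else 0

/-- Entry `(l, j)` (0-indexed) of the subdiagonal (disinvestment) block `C^i`. -/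
noncomputable def hjbCEntry (ρ θ : ℕ → ℕ → ℝ) (i l j : ℕ) : ℝ :=
  if l ≠ 0 ∧ j = l then -(1 - θ i l) * ρ i l else 0

/-- Entry `(l, j)` (0-indexed) of the superdiagonal (investment) block `D^i`:
`D_{l, l-d} = -(1-ρ) λ` and `D_{l, l-d+1} = -(1-ρ)(1-λ)` for rows `l ≥ d`
(0-indexed), all other entries `0`. -/
noncomputable def hjbDEntry (lam : ℝ) (d : ℕ) (ρ : ℕ → ℕ → ℝ) (i l j : ℕ) : ℝ :=
  if d ≤ l ∧ j + d = l then -(1 - ρ i l) * lam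
  else if d ≤ l ∧ j + d = l + 1 then -(1 - ρ i l) * (1 - lam)
  else 0

section MmatrixAux

open Finset

/-- Core M-matrix comparison lemma. -/
lemma mmatrix_key {n : Type*} [Fintype n] (B : Matrix n n ℝ) (v : n → ℝ)
    (hv : ∀ p, 0 < v p) (hoff : ∀ p q, p ≠ q → B p q ≤ 0)
    (hBv : ∀ p, 0 < B.mulVec v p) {x y : n → ℝ} (hxy : B.mulVec x = y)
    (hy : ∀ p, 0 ≤ y p) : ∀ p, 0 ≤ x p := by
  by_contra hcon
  push_neg at hcon
  obtain ⟨p1, hp1⟩ := hcon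
  obtain ⟨p₀, -, hmin⟩ := Finset.exists_min_image Finset.univ
    (fun p => x p / v p) ⟨p1, Finset.mem_univ p1⟩
  set m := x p₀ / v p₀ with hm
  have hmlt : m < 0 := lt_of_le_of_lt (hmin p1 (Finset.mem_univ p1))
    (div_neg_of_neg_of_pos hp1 (hv p1))
  have hxq : ∀ q, m * v q ≤ x q := by
    intro q
    have := hmin q (Finset.mem_univ q)
    calc m * v q ≤ (x q / v q) * v q := by
          exact mul_le_mul_of_nonneg_right this (hv q).le
      _ = x q := div_mul_cancel₀ _ (hv q).ne'
  have hle : B.mulVec x p₀ ≤ m * B.mulVec v p₀ := by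
    simp only [Matrix.mulVec, dotProduct]
    rw [Finset.mul_sum]
    apply Finset.sum_le_sum
    intro q _
    rcases eq_or_ne q p₀ with rfl | hq
    · have : x q = m * v q := (div_mul_cancel₀ _ (hv q).ne').symm
      rw [this]; ring_nf; exact le_refl _
    · have h1 : B p₀ q ≤ 0 := hoff p₀ q (Ne.symm hq)
      calc B p₀ q * x q ≤ B p₀ q * (m * v q) :=
            mul_le_mul_of_nonpos_left (hxq q) h1
        _ = m * (B p₀ q * v q) := by ring
  have : (0:ℝ) < 0 := by
    calc (0:ℝ) ≤ y p₀ := hy p₀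
      _ = B.mulVec x p₀ := by rw [hxy]
      _ ≤ m * B.mulVec v p₀ := hle
      _ < 0 := mul_neg_of_neg_of_pos hmlt (hBv p₀)
  exact absurd this (lt_irrefl 0)

lemma mmatrix_main {n : Type*} [Fintype n] [DecidableEq n] (B : Matrix n n ℝ) (v : n → ℝ)
    (hv : ∀ p, 0 < v p) (hoff : ∀ p q, p ≠ q → B p q ≤ 0)
    (hBv : ∀ p, 0 < B.mulVec v p) :
    IsUnit B ∧ ∀ p q, 0 ≤ B⁻¹ p q := by
  have hdet : B.det ≠ 0 := by
    intro h0
    obtain ⟨w, hw, hBw⟩ := (Matrix.exists_mulVec_eq_zero_iff).2 h0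
    have h1 : ∀ p, 0 ≤ w p := mmatrix_key B v hv hoff hBv hBw (fun p => le_refl 0)
    have h2 : ∀ p, 0 ≤ (-w) p := by
      refine mmatrix_key B v hv hoff hBv (x := -w) (y := 0) ?_ (fun p => le_refl 0)
      rw [Matrix.mulVec_neg, hBw]; simp
    apply hw
    funext p
    have := h2 p
    simp only [Pi.neg_apply, Left.nonneg_neg_iff] at this
    exact le_antisymm this (h1 p)
  have hU : IsUnit B := (Matrix.isUnit_iff_isUnit_det B).2 (isUnit_iff_ne_zero.2 hdet)
  refine ⟨hU, fun p q => ?_⟩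
  have hmul : B * B⁻¹ = 1 := Matrix.mul_nonsing_inv B (isUnit_iff_ne_zero.2 hdet)
  have hxy : B.mulVec (fun r => B⁻¹ r q) = fun r => (1 : Matrix n n ℝ) r q := by
    funext r
    simp only [Matrix.mulVec, dotProduct]
    rw [← Matrix.mul_apply, hmul]
  have := mmatrix_key B v hv hoff hBv hxy (fun r => by
    by_cases h : r = q <;> simp [Matrix.one_apply, h])
  exact this p

lemma sum_ite_of_unique {N : ℕ} (P : Fin N → Prop) [DecidablePred P] (g : Fin N → ℝ)
    (k : Fin N) (hP : P k) (hu : ∀ j, P j → j = k) :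
    (∑ j : Fin N, if P j then g j else 0) = g k := by
  rw [Finset.sum_eq_single k]
  · exact if_pos hP
  · intro b _ hb
    exact if_neg (fun h => hb (hu b h))
  · intro h
    exact absurd (Finset.mem_univ k) h

lemma sum_ite_of_none {N : ℕ} (P : Fin N → Prop) [DecidablePred P] (g : Fin N → ℝ)
    (h : ∀ j, ¬ P j) : (∑ j : Fin N, if P j then g j else 0) = 0 :=
  Finset.sum_eq_zero fun j _ => if_neg (h j)

lemma sum_ite_const {α : Type*} [Fintype α] (c : Prop) [Decidable c] (f : α → ℝ) :
    (∑ a : α, if c then f a else 0) = if c then ∑ a : α, f a else 0 := by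
  split_ifs <;> simp

lemma hjbC_zero'' (ρ θ : ℕ → ℕ → ℝ) (i l j : ℕ) (hρv : ρ i l = 0) :
    hjbCEntry ρ θ i l j = 0 := by
  simp only [hjbCEntry, hρv]
  split_ifs <;> ring1

lemma sum_ite_self {N : ℕ} (i : Fin N) (g : Fin N → ℝ) :
    (∑ i' : Fin N, if (i':ℕ) = (i:ℕ) then g i' else 0) = g i :=
  sum_ite_of_unique _ g i rfl (fun j hj => Fin.ext hj)

lemma sum_ite_pred {N : ℕ} (i : Fin N) (hi0 : (i:ℕ) ≠ 0) (g : Fin N → ℝ) :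
    (∑ i' : Fin N, if (i':ℕ) + 1 = (i:ℕ) then g i' else 0)
      = g ⟨(i:ℕ) - 1, by have := i.isLt; omega⟩ := by
  apply sum_ite_of_unique _ g ⟨(i:ℕ) - 1, by have := i.isLt; omega⟩
  · show (i:ℕ) - 1 + 1 = (i:ℕ)
    omega
  · intro j hj
    exact Fin.ext (by show (j:ℕ) = (i:ℕ) - 1; omega)

lemma sum_ite_succ {N : ℕ} (i : Fin N) (hi : (i:ℕ) + 1 < N) (g : Fin N → ℝ) :
    (∑ i' : Fin N, if (i:ℕ) + 1 = (i':ℕ) then g i' else 0) = g ⟨(i:ℕ) + 1, hi⟩ :=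
  sum_ite_of_unique _ g ⟨(i:ℕ) + 1, hi⟩ rfl (fun j hj => Fin.ext hj.symm)

noncomputable def zD (dx r : ℝ) (c1 c2 ρ θ ψ : ℕ → ℕ → ℝ) (i l : ℕ) : ℝ :=
  ρ i l * θ i l * (ψ i l * (r + 2 * c2 i l / dx ^ 2 +
      (if 2 * c2 i l < dx * |c1 i l| then (1:ℝ) else 0) * |c1 i l| / dx)
    + (1 - ψ i l) / dx) + ρ i l * (1 - θ i l) + (1 - ρ i l)

noncomputable def zU (dx : ℝ) (c1 c2 ρ θ ψ : ℕ → ℕ → ℝ) (i l : ℕ) : ℝ :=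
  -(ρ i l * θ i l * ψ i l *
    (c2 i l / dx ^ 2 + c1 i l / (2 * dx) +
      (if 2 * c2 i l < dx * |c1 i l| then (1:ℝ) else 0) * |c1 i l| / (2 * dx)))

noncomputable def zL (dx : ℝ) (c1 c2 ρ θ ψ : ℕ → ℕ → ℝ) (i l : ℕ) : ℝ :=
  ρ i l * θ i l *
    (-(ψ i l * (c2 i l / dx ^ 2 - c1 i l / (2 * dx) +
      (if 2 * c2 i l < dx * |c1 i l| then (1:ℝ) else 0) * |c1 i l| / (2 * dx)))
      - (1 - ψ i l) / dx)

lemma hjbZ_decomp (dx r : ℝ) (c1 c2 ρ θ ψ : ℕ → ℕ → ℝ) (i l j : ℕ) (hl : l ≠ 0) :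
    hjbZEntry dx r c1 c2 ρ θ ψ i l j =
      (if j = l then zD dx r c1 c2 ρ θ ψ i l else 0) +
      (if j = l + 1 then zU dx c1 c2 ρ θ ψ i l else 0) +
      (if j = l - 1 then zL dx c1 c2 ρ θ ψ i l else 0) := by
  simp only [hjbZEntry, zD, zU, zL, if_neg hl]
  split_ifs <;> first | (exfalso; omega) | ring1

lemma hjbZ_dirichlet (dx r : ℝ) (c1 c2 ρ θ ψ : ℕ → ℕ → ℝ) (i l j : ℕ)
    (hl : l = 0) (hj : j ≠ 0) : hjbZEntry dx r c1 c2 ρ θ ψ i l j = 0 := by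
  simp [hjbZEntry, hl, hj]

lemma hjbC_zero (ρ θ : ℕ → ℕ → ℝ) (i l j : ℕ) (hθv : θ i l = 1) :
    hjbCEntry ρ θ i l j = 0 := by
  simp only [hjbCEntry, hθv]
  split_ifs <;> ring1

lemma hjbC_zero' (ρ θ : ℕ → ℕ → ℝ) (i l j : ℕ) (hl : l = 0) :
    hjbCEntry ρ θ i l j = 0 := by
  simp [hjbCEntry, hl]

lemma hjbD_zero (lam : ℝ) (d : ℕ) (ρ : ℕ → ℕ → ℝ) (i l j : ℕ) (hρv : ρ i l = 1) :
    hjbDEntry lam d ρ i l j = 0 := by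
  simp only [hjbDEntry, hρv]
  split_ifs <;> ring1

lemma hjbD_zero' (lam : ℝ) (d : ℕ) (ρ : ℕ → ℕ → ℝ) (i l j : ℕ) (hdl : l < d) :
    hjbDEntry lam d ρ i l j = 0 := by
  simp only [hjbDEntry]
  split_ifs <;> first | (exfalso; omega) | ring1

/-- sum of the `Z` row against a weight vector, for `l ≠ 0`. -/
lemma sumZ_mul {M : ℕ} (dx r : ℝ) (c1 c2 ρ θ ψ : ℕ → ℕ → ℝ) (i l : ℕ)
    (hl : l ≠ 0) (hlM : l < M) (w : Fin M → ℝ) :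
    (∑ j : Fin M, hjbZEntry dx r c1 c2 ρ θ ψ i l (j:ℕ) * w j)
    = zD dx r c1 c2 ρ θ ψ i l * w ⟨l, hlM⟩
      + (if h : l + 1 < M then zU dx c1 c2 ρ θ ψ i l * w ⟨l+1, h⟩ else 0)
      + zL dx c1 c2 ρ θ ψ i l * w ⟨l-1, by omega⟩ := by
  have hterm : ∀ j : Fin M, hjbZEntry dx r c1 c2 ρ θ ψ i l (j:ℕ) * w j =
      (if (j:ℕ) = l then zD dx r c1 c2 ρ θ ψ i l * w j else 0)
      + (if (j:ℕ) = l + 1 then zU dx c1 c2 ρ θ ψ i l * w j else 0)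
      + (if (j:ℕ) = l - 1 then zL dx c1 c2 ρ θ ψ i l * w j else 0) := by
    intro j
    rw [hjbZ_decomp dx r c1 c2 ρ θ ψ i l (j:ℕ) hl]
    split_ifs <;> first | (exfalso; omega) | ring1
  simp only [hterm, Finset.sum_add_distrib]
  congr 1
  · congr 1
    · exact sum_ite_of_unique _ _ ⟨l, hlM⟩ rfl (fun j hj => Fin.ext hj)
    · split_ifs with h
      · exact sum_ite_of_unique _ _ ⟨l+1, h⟩ rfl (fun j hj => Fin.ext hj)
      · exact sum_ite_of_none _ _ (fun j hj => by
          have := j.isLt; omega)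
  · exact sum_ite_of_unique _ _ ⟨l-1, by omega⟩ rfl (fun j hj => Fin.ext hj)

lemma sumC_mul {M : ℕ} (ρ θ : ℕ → ℕ → ℝ) (i l : ℕ)
    (hl : l ≠ 0) (hlM : l < M) (w : Fin M → ℝ) :
    (∑ j : Fin M, hjbCEntry ρ θ i l (j:ℕ) * w j)
    = -(1 - θ i l) * ρ i l * w ⟨l, hlM⟩ := by
  have hterm : ∀ j : Fin M, hjbCEntry ρ θ i l (j:ℕ) * w j =
      (if (j:ℕ) = l then -(1 - θ i l) * ρ i l * w j else 0) := by
    intro j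
    simp only [hjbCEntry]
    split_ifs <;> first | (exfalso; omega) | ring1
  simp only [hterm]
  exact sum_ite_of_unique _ _ ⟨l, hlM⟩ rfl (fun j hj => Fin.ext hj)

lemma sumD_mul {M : ℕ} (lam : ℝ) (d : ℕ) (ρ : ℕ → ℕ → ℝ) (i l : ℕ)
    (hd1 : 1 ≤ d) (hdl : d ≤ l) (hlM : l < M) (w : Fin M → ℝ) :
    (∑ j : Fin M, hjbDEntry lam d ρ i l (j:ℕ) * w j)
    = -(1 - ρ i l) * lam * w ⟨l - d, by omega⟩
      + -(1 - ρ i l) * (1 - lam) * w ⟨l - d + 1, by omega⟩ := by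
  have hterm : ∀ j : Fin M, hjbDEntry lam d ρ i l (j:ℕ) * w j =
      (if (j:ℕ) = l - d then -(1 - ρ i l) * lam * w j else 0)
      + (if (j:ℕ) = l - d + 1 then -(1 - ρ i l) * (1 - lam) * w j else 0) := by
    intro j
    simp only [hjbDEntry]
    split_ifs <;> first | (exfalso; omega) | ring1
  simp only [hterm, Finset.sum_add_distrib]
  congr 1
  · exact sum_ite_of_unique _ _ ⟨l - d, by omega⟩ rfl (fun j hj => Fin.ext hj)
  · exact sum_ite_of_unique _ _ ⟨l - d + 1, by omega⟩ rfl (fun j hj => Fin.ext hj)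

lemma innerU_nonneg (dx : ℝ) (hdx : 0 < dx) (a b : ℝ) (hb : 0 < b) :
    0 ≤ b / dx ^ 2 + a / (2 * dx) +
      (if 2 * b < dx * |a| then (1:ℝ) else 0) * |a| / (2 * dx) := by
  split_ifs with hI
  · have h1 : -|a| ≤ a := neg_abs_le a
    have h2 : (0:ℝ) ≤ b / dx ^ 2 := by positivity
    have h3 : a / (2 * dx) + 1 * |a| / (2 * dx) = (a + |a|) / (2 * dx) := by ring
    have h4 : (0:ℝ) ≤ (a + |a|) / (2 * dx) := by
      apply div_nonneg (by linarith) (by linarith)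
    linarith
  · push_neg at hI
    have h1 : b / dx ^ 2 + a / (2 * dx) + 0 * |a| / (2 * dx)
        = (2 * b + dx * a) / (2 * dx ^ 2) := by
      field_simp
      ring
    rw [h1]
    apply div_nonneg _ (by positivity)
    nlinarith [neg_abs_le a, hdx]

lemma innerL_nonneg (dx : ℝ) (hdx : 0 < dx) (a b : ℝ) (hb : 0 < b) :
    0 ≤ b / dx ^ 2 - a / (2 * dx) +
      (if 2 * b < dx * |a| then (1:ℝ) else 0) * |a| / (2 * dx) := by
  have := innerU_nonneg dx hdx (-a) b hb
  rw [abs_neg, neg_div] at this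
  linarith [this]

end MmatrixAux
/-- Corollary: the block-tridiagonal matrix `A` of the multi-level discretized
HJB scheme is an M-matrix: `A` is invertible and `A⁻¹` has nonnegative entries. -/
theorem multiLevel_A_is_Mmatrix
    (N M : ℕ) (hN : 2 ≤ N) (hM : 2 ≤ M)
    (dx r K γ h : ℝ) (hdx : 0 < dx) (hr : 0 < r) (hK : 0 < K)
    (hγ : 0 < γ) (hh : 0 < h)
    (d : ℕ) (hd : d = 1 + ⌊2 * γ * h / dx⌋₊)
    (lam : ℝ) (hlam : lam = 2 * γ * h / dx - (⌊2 * γ * h / dx⌋₊ : ℝ))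
    (c1 c2 ρ θ ψ : ℕ → ℕ → ℝ)
    (hc2 : ∀ i < N, ∀ l < M, 0 < c2 i l)
    (hc1 : ∀ i < N, ∀ l < M, |c1 i l| ≤ K)
    (hρ : ∀ i < N, ∀ l < M, ρ i l = 0 ∨ ρ i l = 1)
    (hθ : ∀ i < N, ∀ l < M, θ i l = 0 ∨ θ i l = 1)
    (hψ : ∀ i < N, ∀ l < M, ψ i l = 0 ∨ ψ i l = 1)
    -- dividend controls at the right boundary
    (hψM : ∀ i < N, ψ i (M - 1) = 0)
    (hρM : ∀ i < N, ρ i (M - 1) = 1)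
    (hθM : ∀ i < N, θ i (M - 1) = 1)
    -- no disinvestment at the lowest level
    (hθ1 : ∀ l < M, θ 0 l = 1)
    -- no investment at the highest level
    (hρN : ∀ l < M, ρ (N - 1) l = 1)
    -- no investment too close to the left boundary
    (hρd : ∀ i < N, ∀ l < d, ρ i l = 1)
    (A : Matrix (Fin N × Fin M) (Fin N × Fin M) ℝ)
    (hA : ∀ (i : Fin N) (l : Fin M) (i' : Fin N) (j : Fin M),
      A (i, l) (i', j) =
        if i' = i then hjbZEntry dx r c1 c2 ρ θ ψ i.val l.val j.val
        else if (i' : ℕ) + 1 = (i : ℕ) then hjbCEntry ρ θ i.val l.val j.val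
        else if (i : ℕ) + 1 = (i' : ℕ) then hjbDEntry lam d ρ i.val l.val j.val
        else 0) :
    IsUnit A ∧ ∀ p q, 0 ≤ A⁻¹ p q := by

  -- basic positivity facts
  have hdx' : dx ≠ 0 := ne_of_gt hdx
  have hx0 : (0:ℝ) ≤ 2 * γ * h / dx := by positivity
  have hlam0 : 0 ≤ lam := by
    rw [hlam]; have := Nat.floor_le hx0; linarith
  have hlam1 : lam < 1 := by
    rw [hlam]; have := Nat.lt_floor_add_one (2 * γ * h / dx); linarith
  have hd1 : 1 ≤ d := by omega
  obtain ⟨s, hs⟩ : ∃ x : ℝ, x = r * dx / (2 * K) := ⟨_, rfl⟩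
  have hs0 : 0 < s := by rw [hs]; positivity
  obtain ⟨eta, heta⟩ : ∃ x : ℝ, x = (d : ℝ) - 1 + lam := ⟨_, rfl⟩
  have heta0 : 0 < eta := by
    rcases Nat.lt_or_ge d 2 with hd2 | hd2
    · have hdeq : d = 1 := by omega
      have hfl : ⌊2 * γ * h / dx⌋₊ = 0 := by omega
      have hlam' : lam = 2 * γ * h / dx := by rw [hlam, hfl]; simp
      have hpos : 0 < 2 * γ * h / dx := by positivity
      rw [heta, hdeq]; push_cast; linarith
    · have : (2:ℝ) ≤ (d:ℝ) := by exact_mod_cast hd2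
      rw [heta]; linarith
  obtain ⟨eps, heps⟩ : ∃ x : ℝ, x = s * eta / 2 := ⟨_, rfl⟩
  have heps0 : 0 < eps := by
    rw [heps]
    have := mul_pos hs0 heta0
    linarith
  obtain ⟨v, hv⟩ : ∃ f : Fin N × Fin M → ℝ,
      f = fun p => 1 + s * ((p.2 : ℕ) : ℝ) + eps * ((p.1 : ℕ) : ℝ) := ⟨_, rfl⟩
  have hvpos : ∀ p, 0 < v p := by
    intro p
    have h1 : (0:ℝ) ≤ s * ((p.2 : ℕ) : ℝ) := mul_nonneg hs0.le (Nat.cast_nonneg _)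
    have h2 : (0:ℝ) ≤ eps * ((p.1 : ℕ) : ℝ) := mul_nonneg heps0.le (Nat.cast_nonneg _)
    rw [hv]; dsimp only; linarith
  -- off-diagonal entries nonpositive
  have hoff : ∀ p q, p ≠ q → A p q ≤ 0 := by
    rintro ⟨i, l⟩ ⟨i', j⟩ hne
    have hiN : (i:ℕ) < N := i.isLt
    have hlM : (l:ℕ) < M := l.isLt
    have hjM : (j:ℕ) < M := j.isLt
    have hρb : 0 ≤ ρ (i:ℕ) (l:ℕ) ∧ ρ (i:ℕ) (l:ℕ) ≤ 1 := by
      rcases hρ (i:ℕ) hiN (l:ℕ) hlM with h1 | h1 <;> rw [h1] <;> norm_num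
    have hθb : 0 ≤ θ (i:ℕ) (l:ℕ) ∧ θ (i:ℕ) (l:ℕ) ≤ 1 := by
      rcases hθ (i:ℕ) hiN (l:ℕ) hlM with h1 | h1 <;> rw [h1] <;> norm_num
    have hψb : 0 ≤ ψ (i:ℕ) (l:ℕ) ∧ ψ (i:ℕ) (l:ℕ) ≤ 1 := by
      rcases hψ (i:ℕ) hiN (l:ℕ) hlM with h1 | h1 <;> rw [h1] <;> norm_num
    have hc2p : 0 < c2 (i:ℕ) (l:ℕ) := hc2 (i:ℕ) hiN (l:ℕ) hlM
    rw [hA]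
    split_ifs with h1 h2 h3
    · -- diagonal block, off-diagonal entry
      have hlj : (j:ℕ) ≠ (l:ℕ) := by
        intro hcon
        refine hne ?_
        rw [Prod.mk.injEq]
        exact ⟨h1.symm, Fin.ext hcon.symm⟩
      by_cases hl0 : (l:ℕ) = 0
      · rw [hjbZ_dirichlet dx r c1 c2 ρ θ ψ (i:ℕ) (l:ℕ) (j:ℕ) hl0 (by omega)]
      · rw [hjbZ_decomp dx r c1 c2 ρ θ ψ (i:ℕ) (l:ℕ) (j:ℕ) hl0, if_neg hlj]
        have hUn : 0 ≤ c2 (i:ℕ) (l:ℕ) / dx ^ 2 + c1 (i:ℕ) (l:ℕ) / (2 * dx) +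
            (if 2 * c2 (i:ℕ) (l:ℕ) < dx * |c1 (i:ℕ) (l:ℕ)| then (1:ℝ) else 0) *
              |c1 (i:ℕ) (l:ℕ)| / (2 * dx) :=
          innerU_nonneg dx hdx _ _ hc2p
        have hLn : 0 ≤ c2 (i:ℕ) (l:ℕ) / dx ^ 2 - c1 (i:ℕ) (l:ℕ) / (2 * dx) +
            (if 2 * c2 (i:ℕ) (l:ℕ) < dx * |c1 (i:ℕ) (l:ℕ)| then (1:ℝ) else 0) *
              |c1 (i:ℕ) (l:ℕ)| / (2 * dx) :=
          innerL_nonneg dx hdx _ _ hc2p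
        have hzU : zU dx c1 c2 ρ θ ψ (i:ℕ) (l:ℕ) ≤ 0 := by
          simp only [zU]
          have : 0 ≤ ρ (i:ℕ) (l:ℕ) * θ (i:ℕ) (l:ℕ) * ψ (i:ℕ) (l:ℕ) *
              (c2 (i:ℕ) (l:ℕ) / dx ^ 2 + c1 (i:ℕ) (l:ℕ) / (2 * dx) +
              (if 2 * c2 (i:ℕ) (l:ℕ) < dx * |c1 (i:ℕ) (l:ℕ)| then (1:ℝ) else 0) *
                |c1 (i:ℕ) (l:ℕ)| / (2 * dx)) := by
            apply mul_nonneg _ hUn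
            exact mul_nonneg (mul_nonneg hρb.1 hθb.1) hψb.1
          linarith
        have hzL : zL dx c1 c2 ρ θ ψ (i:ℕ) (l:ℕ) ≤ 0 := by
          simp only [zL]
          apply mul_nonpos_of_nonneg_of_nonpos (mul_nonneg hρb.1 hθb.1)
          have h5 : 0 ≤ ψ (i:ℕ) (l:ℕ) *
              (c2 (i:ℕ) (l:ℕ) / dx ^ 2 - c1 (i:ℕ) (l:ℕ) / (2 * dx) +
              (if 2 * c2 (i:ℕ) (l:ℕ) < dx * |c1 (i:ℕ) (l:ℕ)| then (1:ℝ) else 0) *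
                |c1 (i:ℕ) (l:ℕ)| / (2 * dx)) := mul_nonneg hψb.1 hLn
          have h6 : 0 ≤ (1 - ψ (i:ℕ) (l:ℕ)) / dx :=
            div_nonneg (by linarith [hψb.2]) hdx.le
          linarith
        split_ifs <;> first | (exfalso; omega) | linarith
    · -- C block
      simp only [hjbCEntry]
      split_ifs with hcnd
      · have : 0 ≤ (1 - θ (i:ℕ) (l:ℕ)) * ρ (i:ℕ) (l:ℕ) :=
          mul_nonneg (by linarith [hθb.2]) hρb.1
        linarith
      · exact le_refl _
    · -- D block
      simp only [hjbDEntry]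
      split_ifs with hc1' hc2'
      · have : 0 ≤ (1 - ρ (i:ℕ) (l:ℕ)) * lam :=
          mul_nonneg (by linarith [hρb.2]) hlam0
        linarith
      · have : 0 ≤ (1 - ρ (i:ℕ) (l:ℕ)) * (1 - lam) :=
          mul_nonneg (by linarith [hρb.2]) (by linarith)
        linarith
      · exact le_refl _
    · exact le_refl _
  have hAv : ∀ p, 0 < A.mulVec v p := by
    rintro ⟨i, l⟩
    have hiN : (i:ℕ) < N := i.isLt
    have hlM : (l:ℕ) < M := l.isLt
    have hsum : A.mulVec v (i, l)
        = ∑ i' : Fin N, ∑ j : Fin M, A (i, l) (i', j) * v (i', j) := by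
      simp only [Matrix.mulVec, dotProduct]
      exact Fintype.sum_prod_type _
    rw [hsum]
    have hentry : ∀ (i' : Fin N) (j : Fin M), A (i, l) (i', j) * v (i', j) =
        (if (i':ℕ) = (i:ℕ) then
            hjbZEntry dx r c1 c2 ρ θ ψ (i:ℕ) (l:ℕ) (j:ℕ) * v (i', j) else 0)
      + (if (i':ℕ) + 1 = (i:ℕ) then hjbCEntry ρ θ (i:ℕ) (l:ℕ) (j:ℕ) * v (i', j) else 0)
      + (if (i:ℕ) + 1 = (i':ℕ) then hjbDEntry lam d ρ (i:ℕ) (l:ℕ) (j:ℕ) * v (i', j) else 0) := by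
      intro i' j
      rw [hA]
      simp only [Fin.ext_iff]
      split_ifs <;> first | (exfalso; omega) | ring1
    simp only [hentry, Finset.sum_add_distrib, sum_ite_const]
    rw [sum_ite_self i]
    by_cases hl0 : (l:ℕ) = 0
    · -- Dirichlet row
      have hZl0 : ∀ j : Fin M, hjbZEntry dx r c1 c2 ρ θ ψ (i:ℕ) (l:ℕ) (j:ℕ) * v (i, j)
          = if (j:ℕ) = (l:ℕ) then v (i, j) else 0 := by
        intro j
        by_cases hj : (j:ℕ) = (l:ℕ)
        · rw [if_pos hj]
          have h1 : hjbZEntry dx r c1 c2 ρ θ ψ (i:ℕ) (l:ℕ) (j:ℕ) = 1 := by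
            simp [hjbZEntry, hl0, show (j:ℕ) = 0 by omega]
          rw [h1, one_mul]
        · rw [if_neg hj,
            hjbZ_dirichlet dx r c1 c2 ρ θ ψ (i:ℕ) (l:ℕ) (j:ℕ) hl0 (by omega), zero_mul]
      rw [Finset.sum_congr rfl (fun j _ => hZl0 j), sum_ite_self l]
      have e2 : (∑ i' : Fin N, if (i':ℕ) + 1 = (i:ℕ) then
          ∑ j : Fin M, hjbCEntry ρ θ (i:ℕ) (l:ℕ) (j:ℕ) * v (i', j) else 0) = 0 := by
        apply Finset.sum_eq_zero
        intro i' _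
        split_ifs with hcnd
        · apply Finset.sum_eq_zero
          intro j _
          rw [hjbC_zero' ρ θ (i:ℕ) (l:ℕ) (j:ℕ) hl0, zero_mul]
        · rfl
      have e3 : (∑ i' : Fin N, if (i:ℕ) + 1 = (i':ℕ) then
          ∑ j : Fin M, hjbDEntry lam d ρ (i:ℕ) (l:ℕ) (j:ℕ) * v (i', j) else 0) = 0 := by
        apply Finset.sum_eq_zero
        intro i' _
        split_ifs with hcnd
        · apply Finset.sum_eq_zero
          intro j _
          rw [hjbD_zero' lam d ρ (i:ℕ) (l:ℕ) (j:ℕ) (by omega), zero_mul]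
        · rfl
      rw [e2, e3]
      have := hvpos (i, l)
      linarith
    · -- interior rows
      rw [sumZ_mul dx r c1 c2 ρ θ ψ (i:ℕ) (l:ℕ) hl0 hlM (fun j => v (i, j))]
      rcases hρ (i:ℕ) hiN (l:ℕ) hlM with hρ0 | hρ1
      · -- ρ = 0 : investment row
        have hdl : d ≤ (l:ℕ) := by
          by_contra hcon
          push_neg at hcon
          have := hρd (i:ℕ) hiN (l:ℕ) hcon
          rw [hρ0] at this
          norm_num at this
        have hiN1 : (i:ℕ) + 1 < N := by
          rcases Nat.lt_or_ge ((i:ℕ) + 1) N with hlt | hge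
          · exact hlt
          · exfalso
            have hieq : (i:ℕ) = N - 1 := by omega
            rw [hieq, hρN (l:ℕ) hlM] at hρ0
            norm_num at hρ0
        have hzD : zD dx r c1 c2 ρ θ ψ (i:ℕ) (l:ℕ) = 1 := by
          simp [zD, hρ0]
        have hzU : zU dx c1 c2 ρ θ ψ (i:ℕ) (l:ℕ) = 0 := by
          simp [zU, hρ0]
        have hzL : zL dx c1 c2 ρ θ ψ (i:ℕ) (l:ℕ) = 0 := by
          simp [zL, hρ0]
        have e2 : (∑ i' : Fin N, if (i':ℕ) + 1 = (i:ℕ) then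
            ∑ j : Fin M, hjbCEntry ρ θ (i:ℕ) (l:ℕ) (j:ℕ) * v (i', j) else 0) = 0 := by
          apply Finset.sum_eq_zero
          intro i' _
          split_ifs with hcnd
          · apply Finset.sum_eq_zero
            intro j _
            rw [hjbC_zero'' ρ θ (i:ℕ) (l:ℕ) (j:ℕ) hρ0, zero_mul]
          · rfl
        rw [e2, sum_ite_succ i hiN1,
          sumD_mul lam d ρ (i:ℕ) (l:ℕ) hd1 hdl hlM (fun j => v (⟨(i:ℕ)+1, hiN1⟩, j))]
        have hdite : (if h : (l:ℕ) + 1 < M then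
            zU dx c1 c2 ρ θ ψ (i:ℕ) (l:ℕ) * v (i, ⟨(l:ℕ)+1, h⟩) else 0) = 0 := by
          split_ifs with h
          · rw [hzU, zero_mul]
          · rfl
        rw [hdite, hzD, hzL, hρ0]
        simp only [hv]
        push_cast [Nat.cast_sub hdl]
        have hpos : 0 < s * ((d:ℝ) - 1 + lam) := by
          rw [heta] at heta0
          exact mul_pos hs0 heta0
        rw [heps, heta]
        linarith [hpos]
      · -- ρ = 1
        have e3 : (∑ i' : Fin N, if (i:ℕ) + 1 = (i':ℕ) then
            ∑ j : Fin M, hjbDEntry lam d ρ (i:ℕ) (l:ℕ) (j:ℕ) * v (i', j) else 0) = 0 := by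
          apply Finset.sum_eq_zero
          intro i' _
          split_ifs with hcnd
          · apply Finset.sum_eq_zero
            intro j _
            rw [hjbD_zero lam d ρ (i:ℕ) (l:ℕ) (j:ℕ) hρ1, zero_mul]
          · rfl
        rw [e3]
        rcases hθ (i:ℕ) hiN (l:ℕ) hlM with hθ0 | hθ1'
        · -- θ = 0 : disinvestment row
          have hi0 : (i:ℕ) ≠ 0 := by
            intro hcon
            rw [hcon, hθ1 (l:ℕ) hlM] at hθ0
            norm_num at hθ0
          have hzD : zD dx r c1 c2 ρ θ ψ (i:ℕ) (l:ℕ) = 1 := by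
            simp [zD, hρ1, hθ0]
          have hzU : zU dx c1 c2 ρ θ ψ (i:ℕ) (l:ℕ) = 0 := by
            simp [zU, hθ0]
          have hzL : zL dx c1 c2 ρ θ ψ (i:ℕ) (l:ℕ) = 0 := by
            simp [zL, hθ0]
          rw [sum_ite_pred i hi0,
            sumC_mul ρ θ (i:ℕ) (l:ℕ) hl0 hlM
              (fun j => v (⟨(i:ℕ)-1, by omega⟩, j))]
          have hdite : (if h : (l:ℕ) + 1 < M then
              zU dx c1 c2 ρ θ ψ (i:ℕ) (l:ℕ) * v (i, ⟨(l:ℕ)+1, h⟩) else 0) = 0 := by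
            split_ifs with h
            · rw [hzU, zero_mul]
            · rfl
          rw [hdite, hzD, hzL, hθ0, hρ1]
          simp only [hv]
          push_cast [Nat.cast_sub (show 1 ≤ (i:ℕ) by omega)]
          linarith [heps0]
        · -- θ = 1
          have e2 : (∑ i' : Fin N, if (i':ℕ) + 1 = (i:ℕ) then
              ∑ j : Fin M, hjbCEntry ρ θ (i:ℕ) (l:ℕ) (j:ℕ) * v (i', j) else 0) = 0 := by
            apply Finset.sum_eq_zero
            intro i' _
            split_ifs with hcnd
            · apply Finset.sum_eq_zero
              intro j _
              rw [hjbC_zero ρ θ (i:ℕ) (l:ℕ) (j:ℕ) hθ1', zero_mul]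
            · rfl
          rw [e2]
          rcases hψ (i:ℕ) hiN (l:ℕ) hlM with hψ0 | hψ1'
          · -- ψ = 0 : dividend row
            have hzD : zD dx r c1 c2 ρ θ ψ (i:ℕ) (l:ℕ) = 1 / dx := by
              simp [zD, hρ1, hθ1', hψ0]
            have hzU : zU dx c1 c2 ρ θ ψ (i:ℕ) (l:ℕ) = 0 := by
              simp [zU, hψ0]
            have hzL : zL dx c1 c2 ρ θ ψ (i:ℕ) (l:ℕ) = -(1 / dx) := by
              simp [zL, hρ1, hθ1', hψ0]
            have hdite : (if h : (l:ℕ) + 1 < M then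
                zU dx c1 c2 ρ θ ψ (i:ℕ) (l:ℕ) * v (i, ⟨(l:ℕ)+1, h⟩) else 0) = 0 := by
              split_ifs with h
              · rw [hzU, zero_mul]
              · rfl
            rw [hdite, hzD, hzL]
            simp only [hv]
            push_cast [Nat.cast_sub (show 1 ≤ (l:ℕ) by omega)]
            have hsdx : 0 < s / dx := div_pos hs0 hdx
            ring_nf
            ring_nf at hsdx
            linarith [hsdx]
          · -- ψ = 1 : diffusion row
            have hlM1 : (l:ℕ) + 1 < M := by
              have hne' : (l:ℕ) ≠ M - 1 := by
                intro hcon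
                rw [hcon, hψM (i:ℕ) hiN] at hψ1'
                norm_num at hψ1'
              omega
            rw [dif_pos hlM1]
            have hb1 : s * c1 (i:ℕ) (l:ℕ) / dx ≤ r / 2 := by
              have h1 : c1 (i:ℕ) (l:ℕ) ≤ K :=
                le_trans (le_abs_self _) (hc1 (i:ℕ) hiN (l:ℕ) hlM)
              have h2 : s * c1 (i:ℕ) (l:ℕ) ≤ s * K :=
                mul_le_mul_of_nonneg_left h1 hs0.le
              have h3 : s * K / dx = r / 2 := by
                rw [hs]; field_simp
              calc s * c1 (i:ℕ) (l:ℕ) / dx ≤ s * K / dx :=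
                    (div_le_div_iff_of_pos_right hdx).mpr h2
                _ = r / 2 := h3
            have hb2 : 0 ≤ r * (s * ((l:ℕ):ℝ)) :=
              mul_nonneg hr.le (mul_nonneg hs0.le (Nat.cast_nonneg _))
            have hb3 : 0 ≤ r * (eps * ((i:ℕ):ℝ)) :=
              mul_nonneg hr.le (mul_nonneg heps0.le (Nat.cast_nonneg _))
            by_cases hI : 2 * c2 (i:ℕ) (l:ℕ) < dx * |c1 (i:ℕ) (l:ℕ)|
            · simp only [zD, zU, zL, hρ1, hθ1', hψ1', if_pos hI, hv]
              push_cast [Nat.cast_sub (show 1 ≤ (l:ℕ) by omega)]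
              ring_nf
              ring_nf at hb1 hb2 hb3
              linarith [hb1, hb2, hb3, hr]
            · simp only [zD, zU, zL, hρ1, hθ1', hψ1', if_neg hI, hv]
              push_cast [Nat.cast_sub (show 1 ≤ (l:ℕ) by omega)]
              ring_nf
              ring_nf at hb1 hb2 hb3
              linarith [hb1, hb2, hb3, hr]
  exact mmatrix_main A v hvpos hoff hAv
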